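/- Let γ ∈ (0,1), let P ∈ ℝ^{D×D} be row-stochastic, and let (R_j, Z_j), j = 1, …, N (N ≥ 2), be arbitrary pairs with R_j ∈ ℝ^D and Z_j ∈ ℝ^{D×D} row-stochastic. Then for any vectors V̂, V* ∈ ℝ^D: ||(I − γP)^{-1} Σ̂_N(V*) (I − γP)^{-⊤}||_diag^{1/2} ≤ √2·||(I − γP)^{-1} Σ̂_N(V̂) (I − γP)^{-⊤}||_diag^{1/2} + (√8/(1−γ))·||V̂ − V*||_∞. -/

import Mathlib

open Finset Matrix

noncomputable section

/-- A matrix is row-stochastic if its entries are nonnegative and its rows sum to one. -/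
def RowStochastic {D : ℕ} (P : Matrix (Fin D) (Fin D) ℝ) : Prop :=
  (∀ i j, 0 ≤ P i j) ∧ (∀ i, ∑ j, P i j = 1)

/-- `‖A‖_diag`: the maximum absolute diagonal entry of a square matrix. -/
def diagNorm {D : ℕ} (A : Matrix (Fin D) (Fin D) ℝ) : ℝ := ⨆ i, |A i i|

/-- The V-statistic covariance estimate `Σ̂_N(V)` built from the first `N` sample pairs. -/
def covEst {D : ℕ} (γ : ℝ) (N : ℕ) (R : ℕ → Fin D → ℝ) (Z : ℕ → Matrix (Fin D) (Fin D) ℝ)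
    (V : Fin D → ℝ) : Matrix (Fin D) (Fin D) ℝ :=
  Matrix.of fun a b => (1 / ((N : ℝ) * ((N : ℝ) - 1))) *
    ∑ j ∈ Finset.range N, ∑ k ∈ Finset.range N,
      if j < k then
        (R j a - R k a + γ * ((Z j - Z k).mulVec V a)) *
          (R j b - R k b + γ * ((Z j - Z k).mulVec V b))
      else 0

/-! Write `A = (I - γP)⁻¹`. Each diagonal entry of `A Σ̂_N(V) Aᵀ` is a weighted sum over pairs
`j < k` of `((A w_{jk}(V))_i)²`, and `w_{jk}(V*) = w_{jk}(V̂) + γ (Z_j - Z_k)(V* - V̂)`.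
Row-stochastic matrices do not increase the sup norm, so `(1 - γ)‖v‖ ≤ ‖(I - γP)v‖`, whence
`‖A u‖ ≤ ‖u‖ / (1 - γ)` and the perturbation moves each `(A w_{jk})_i` by at most
`2‖V̂ - V*‖ / (1 - γ)`. Now `(x + e)² ≤ 2x² + 2e²`, the pair weights sum to at most one, and
`√(a + b) ≤ √a + √b`. -/

namespace RowStochastic

variable {D : ℕ} {P : Matrix (Fin D) (Fin D) ℝ} {γ : ℝ}

theorem norm_mulVec_le (hP : RowStochastic P) (v : Fin D → ℝ) : ‖P *ᵥ v‖ ≤ ‖v‖ := by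
  refine (pi_norm_le_iff_of_nonneg (norm_nonneg v)).2 fun i => ?_
  calc ‖(P *ᵥ v) i‖ = ‖∑ j, P i j * v j‖ := rfl
    _ ≤ ∑ j, ‖P i j * v j‖ := norm_sum_le _ _
    _ ≤ ∑ j, P i j * ‖v‖ := by
        gcongr with j
        rw [norm_mul, Real.norm_of_nonneg (hP.1 i j)]
        exact mul_le_mul_of_nonneg_left (norm_le_pi_norm v j) (hP.1 i j)
    _ = ‖v‖ := by rw [← Finset.sum_mul, hP.2 i, one_mul]

theorem one_sub_mul_norm_le (hP : RowStochastic P) (hγ : 0 ≤ γ) (v : Fin D → ℝ) :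
    (1 - γ) * ‖v‖ ≤ ‖(1 - γ • P) *ᵥ v‖ := by
  have hv : (1 - γ • P) *ᵥ v + γ • (P *ᵥ v) = v := by
    simp [Matrix.sub_mulVec, Matrix.smul_mulVec]
  have : ‖v‖ ≤ ‖(1 - γ • P) *ᵥ v‖ + γ * ‖v‖ :=
    calc ‖v‖ = ‖(1 - γ • P) *ᵥ v + γ • (P *ᵥ v)‖ := by rw [hv]
      _ ≤ ‖(1 - γ • P) *ᵥ v‖ + γ * ‖P *ᵥ v‖ := by
          grw [norm_add_le, norm_smul, Real.norm_of_nonneg hγ]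
      _ ≤ ‖(1 - γ • P) *ᵥ v‖ + γ * ‖v‖ := by grw [hP.norm_mulVec_le]
  linarith

theorem isUnit_one_sub_smul (hP : RowStochastic P) (hγ0 : 0 ≤ γ) (hγ1 : γ < 1) :
    IsUnit (1 - γ • P) := by
  refine (Matrix.isUnit_iff_isUnit_det _).2 (isUnit_iff_ne_zero.2 fun hdet => ?_)
  obtain ⟨v, hv, hv0⟩ := Matrix.exists_mulVec_eq_zero_iff.2 hdet
  have := hP.one_sub_mul_norm_le hγ0 v
  rw [hv0, norm_zero] at this
  exact hv (norm_le_zero_iff.1 (nonpos_of_mul_nonpos_right this (by linarith)))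

theorem norm_inv_one_sub_smul_mulVec_le (hP : RowStochastic P) (hγ0 : 0 ≤ γ) (hγ1 : γ < 1)
    (u : Fin D → ℝ) : ‖(1 - γ • P)⁻¹ *ᵥ u‖ ≤ (1 - γ)⁻¹ * ‖u‖ := by
  rw [inv_mul_eq_div, le_div_iff₀ (by linarith), mul_comm]
  have := hP.one_sub_mul_norm_le hγ0 ((1 - γ • P)⁻¹ *ᵥ u)
  rwa [Matrix.mulVec_mulVec, Matrix.mul_nonsing_inv _ ((Matrix.isUnit_iff_isUnit_det _).1
    (hP.isUnit_one_sub_smul hγ0 hγ1)), Matrix.one_mulVec] at this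

end RowStochastic

section diagNorm

variable {D : ℕ} (A : Matrix (Fin D) (Fin D) ℝ)

theorem le_diagNorm (i : Fin D) : A i i ≤ diagNorm A :=
  (le_abs_self _).trans (le_ciSup (f := fun i => |A i i|) (Set.finite_range _).bddAbove i)

theorem diagNorm_le {a : ℝ} (h : ∀ i, |A i i| ≤ a) (ha : 0 ≤ a) : diagNorm A ≤ a :=
  Real.iSup_le h ha

theorem diagNorm_nonneg : 0 ≤ diagNorm A :=
  Real.iSup_nonneg fun _ => abs_nonneg _

end diagNorm

def pairAverage {M : Type*} [AddCommMonoid M] [Module ℝ M] (N : ℕ) (f : ℕ → ℕ → M) : M :=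
  (1 / ((N : ℝ) * ((N : ℝ) - 1))) • ∑ j ∈ range N, ∑ k ∈ range N, if j < k then f j k else 0

section pairAverage

theorem pairAverage_weight_nonneg (N : ℕ) : 0 ≤ 1 / ((N : ℝ) * ((N : ℝ) - 1)) := by
  rcases N with _ | n
  · simp
  · push_cast
    simp only [add_sub_cancel_right]
    positivity

theorem sum_pairs_le (N : ℕ) :
    ∑ j ∈ range N, ∑ k ∈ range N, (if j < k then (1 : ℝ) else 0) ≤ (N : ℝ) * ((N : ℝ) - 1) :=
  calc ∑ j ∈ range N, ∑ k ∈ range N, (if j < k then (1 : ℝ) else 0)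
      ≤ ∑ j ∈ range N, ∑ k ∈ range N, (1 - if j = k then (1 : ℝ) else 0) := by
        gcongr with j _ k _
        split_ifs <;> first | omega | norm_num
    _ = (N : ℝ) * ((N : ℝ) - 1) := by
        simp +contextual [sum_sub_distrib]
        ring

variable {N : ℕ}

theorem map_pairAverage {M M' : Type*} [AddCommMonoid M] [Module ℝ M] [AddCommMonoid M']
    [Module ℝ M'] (L : M →ₗ[ℝ] M') (f : ℕ → ℕ → M) :
    L (pairAverage N f) = pairAverage N fun j k => L (f j k) := by
  simp [pairAverage, map_sum, apply_ite]

variable {f g : ℕ → ℕ → ℝ}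

theorem pairAverage_mono (h : ∀ j k, f j k ≤ g j k) : pairAverage N f ≤ pairAverage N g := by
  unfold pairAverage
  gcongr with j _ k _
  · exact pairAverage_weight_nonneg N
  · split_ifs
    exacts [h j k, le_rfl]

theorem pairAverage_nonneg (h : ∀ j k, 0 ≤ f j k) : 0 ≤ pairAverage N f := by
  simpa [pairAverage] using pairAverage_mono (N := N) (f := fun _ _ => 0) h

theorem pairAverage_add :
    pairAverage N (fun j k => f j k + g j k) = pairAverage N f + pairAverage N g := by
  simp [pairAverage, sum_add_distrib, ite_add_zero, mul_add]

theorem pairAverage_const_mul (a : ℝ) :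
    pairAverage N (fun j k => a * f j k) = a * pairAverage N f :=
  (map_pairAverage (LinearMap.mulLeft ℝ a) f).symm

theorem pairAverage_one_le : pairAverage N (fun _ _ => (1 : ℝ)) ≤ 1 :=
  calc pairAverage N (fun _ _ => (1 : ℝ))
      ≤ 1 / ((N : ℝ) * ((N : ℝ) - 1)) * ((N : ℝ) * ((N : ℝ) - 1)) :=
        mul_le_mul_of_nonneg_left (sum_pairs_le N) (pairAverage_weight_nonneg N)
    _ ≤ 1 := by rw [one_div_mul_eq_div]; exact div_self_le_one _

theorem pairAverage_const_le {b : ℝ} (hb : 0 ≤ b) : pairAverage N (fun _ _ => b) ≤ b :=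
  calc pairAverage N (fun _ _ => b) = b * pairAverage N (fun _ _ => (1 : ℝ)) := by
        simpa using pairAverage_const_mul b (f := fun _ _ => 1)
    _ ≤ b := mul_le_of_le_one_right hb pairAverage_one_le

end pairAverage

section covEst

variable {D : ℕ} (γ : ℝ) (R : ℕ → Fin D → ℝ) (Z : ℕ → Matrix (Fin D) (Fin D) ℝ)

/-- The vector `w_{jk}(V)`. -/
def sampleDiff (V : Fin D → ℝ) (j k : ℕ) : Fin D → ℝ :=
  R j - R k + γ • ((Z j - Z k) *ᵥ V)

theorem sampleDiff_eq_add (V V' : Fin D → ℝ) (j k : ℕ) :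
    sampleDiff γ R Z V' j k = sampleDiff γ R Z V j k + γ • ((Z j - Z k) *ᵥ (V' - V)) := by
  simp only [sampleDiff, mulVec_sub, smul_sub]
  abel

theorem covEst_eq_pairAverage (N : ℕ) (V : Fin D → ℝ) :
    covEst γ N R Z V =
      pairAverage N fun j k => vecMulVec (sampleDiff γ R Z V j k) (sampleDiff γ R Z V j k) := by
  ext a b
  simp only [covEst, pairAverage, of_apply, Matrix.smul_apply, Matrix.sum_apply, smul_eq_mul]
  congr! 4 with j _ k _
  split_ifs <;> simp [sampleDiff, vecMulVec_apply]

theorem conj_covEst_apply_diag (N : ℕ) (V : Fin D → ℝ) (A : Matrix (Fin D) (Fin D) ℝ)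
    (i : Fin D) :
    (A * covEst γ N R Z V * Aᵀ) i i =
      pairAverage N fun j k => (A *ᵥ sampleDiff γ R Z V j k) i ^ 2 := by
  let diagEntry : Matrix (Fin D) (Fin D) ℝ →ₗ[ℝ] ℝ :=
    { toFun M := (A * M * Aᵀ) i i
      map_add' M M' := by simp [Matrix.mul_add, Matrix.add_mul]
      map_smul' c M := by simp }
  have := map_pairAverage (N := N) diagEntry fun j k =>
    vecMulVec (sampleDiff γ R Z V j k) (sampleDiff γ R Z V j k)
  simpa [diagEntry, covEst_eq_pairAverage, mul_vecMulVec, vecMulVec_mul, vecMul_transpose,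
    vecMulVec_apply, sq] using this

variable {N : ℕ} {γ} {A : Matrix (Fin D) (Fin D) ℝ} {L : ℝ}

theorem sq_mulVec_sampleDiff_le (hγ : |γ| ≤ 1) (hZ : ∀ j, RowStochastic (Z j)) (hL : 0 ≤ L)
    (hA : ∀ u, ‖A *ᵥ u‖ ≤ L * ‖u‖) (V V' : Fin D → ℝ) (j k : ℕ) (i : Fin D) :
    (A *ᵥ sampleDiff γ R Z V' j k) i ^ 2 ≤
      2 * (A *ᵥ sampleDiff γ R Z V j k) i ^ 2 + 8 * (L * ‖V' - V‖) ^ 2 := by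
  have hZδ : ‖γ • ((Z j - Z k) *ᵥ (V' - V))‖ ≤ 2 * ‖V' - V‖ :=
    calc ‖γ • ((Z j - Z k) *ᵥ (V' - V))‖ ≤ 1 * (‖Z j *ᵥ (V' - V)‖ + ‖Z k *ᵥ (V' - V)‖) := by
          rw [norm_smul, Real.norm_eq_abs, sub_mulVec]
          gcongr
          exact norm_sub_le _ _
      _ ≤ 2 * ‖V' - V‖ := by grw [(hZ j).norm_mulVec_le, (hZ k).norm_mulVec_le]; linarith
  have he : |(A *ᵥ (γ • ((Z j - Z k) *ᵥ (V' - V)))) i| ≤ 2 * (L * ‖V' - V‖) :=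
    calc _ ≤ ‖A *ᵥ (γ • ((Z j - Z k) *ᵥ (V' - V)))‖ := norm_le_pi_norm _ i
      _ ≤ L * (2 * ‖V' - V‖) := by grw [hA, hZδ]
      _ = 2 * (L * ‖V' - V‖) := by ring
  have he2 := pow_le_pow_left₀ (abs_nonneg _) he 2
  rw [sq_abs] at he2
  rw [sampleDiff_eq_add γ R Z V, mulVec_add, Pi.add_apply]
  grw [add_sq_le, he2]
  linarith

theorem conj_covEst_apply_diag_le (hγ : |γ| ≤ 1) (hZ : ∀ j, RowStochastic (Z j)) (hL : 0 ≤ L)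
    (hA : ∀ u, ‖A *ᵥ u‖ ≤ L * ‖u‖) (V V' : Fin D → ℝ) (i : Fin D) :
    (A * covEst γ N R Z V' * Aᵀ) i i ≤
      2 * (A * covEst γ N R Z V * Aᵀ) i i + 8 * (L * ‖V' - V‖) ^ 2 := by
  rw [conj_covEst_apply_diag, conj_covEst_apply_diag, ← pairAverage_const_mul]
  grw [pairAverage_mono fun j k => sq_mulVec_sampleDiff_le R Z hγ hZ hL hA V V' j k i,
    pairAverage_add, pairAverage_const_le (by positivity)]

theorem diagNorm_conj_covEst_le (hγ : |γ| ≤ 1) (hZ : ∀ j, RowStochastic (Z j)) (hL : 0 ≤ L)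
    (hA : ∀ u, ‖A *ᵥ u‖ ≤ L * ‖u‖) (V V' : Fin D → ℝ) :
    diagNorm (A * covEst γ N R Z V' * Aᵀ) ≤
      2 * diagNorm (A * covEst γ N R Z V * Aᵀ) + 8 * (L * ‖V' - V‖) ^ 2 := by
  refine diagNorm_le _ (fun i => ?_) (by grw [← diagNorm_nonneg]; positivity)
  have hnonneg : 0 ≤ (A * covEst γ N R Z V' * Aᵀ) i i := by
    rw [conj_covEst_apply_diag]
    exact pairAverage_nonneg fun _ _ => sq_nonneg _
  rw [abs_of_nonneg hnonneg]
  grw [conj_covEst_apply_diag_le R Z hγ hZ hL hA V V' i,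
    le_diagNorm (A * covEst γ N R Z V * Aᵀ) i]

end covEst

theorem sqrt_le_sqrt_mul_add_sqrt_mul {x y a b c : ℝ} (ha : 0 ≤ a) (hb : 0 ≤ b) (hy : 0 ≤ y)
    (hc : 0 ≤ c) (h : x ≤ a * y + b * c ^ 2) : √x ≤ √a * √y + √b * c := by
  rw [Real.sqrt_le_left (by positivity)]
  nlinarith [Real.sq_sqrt ha, Real.sq_sqrt hb, Real.sq_sqrt hy, mul_nonneg (mul_nonneg
    (mul_nonneg (Real.sqrt_nonneg a) (Real.sqrt_nonneg y)) (Real.sqrt_nonneg b)) hc]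

theorem covEst_lipschitz_general
    {D : ℕ} (γ : ℝ) (hγ : γ ∈ Set.Ioo (0 : ℝ) 1)
    (P : Matrix (Fin D) (Fin D) ℝ) (hP : RowStochastic P)
    (N : ℕ)
    (R : ℕ → Fin D → ℝ) (Z : ℕ → Matrix (Fin D) (Fin D) ℝ)
    (hZ : ∀ j, RowStochastic (Z j))
    (Vhat Vstar : Fin D → ℝ) :
    Real.sqrt (diagNorm ((1 - γ • P)⁻¹ * covEst γ N R Z Vstar * ((1 - γ • P)⁻¹)ᵀ)) ≤
      Real.sqrt 2 *
          Real.sqrt (diagNorm ((1 - γ • P)⁻¹ * covEst γ N R Z Vhat * ((1 - γ • P)⁻¹)ᵀ)) +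
        Real.sqrt 8 / (1 - γ) * ‖Vhat - Vstar‖ := by
  obtain ⟨hγ0, hγ1⟩ := hγ
  have hL : 0 ≤ (1 - γ)⁻¹ := inv_nonneg.2 (by linarith)
  have hdiag := diagNorm_conj_covEst_le (N := N) R Z (abs_le.2 ⟨by linarith, hγ1.le⟩) hZ hL
    (hP.norm_inv_one_sub_smul_mulVec_le hγ0.le hγ1) Vhat Vstar
  calc _ ≤ √2 * √(diagNorm ((1 - γ • P)⁻¹ * covEst γ N R Z Vhat * ((1 - γ • P)⁻¹)ᵀ)) +
          √8 * ((1 - γ)⁻¹ * ‖Vstar - Vhat‖) :=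
        sqrt_le_sqrt_mul_add_sqrt_mul (by norm_num) (by norm_num) (diagNorm_nonneg _)
          (by positivity) hdiag
    _ = _ := by rw [norm_sub_rev]; ring

/-- **Lemma (Statement 12).** Lipschitz property of the V-statistic covariance estimate:
for arbitrary sample pairs `(R_j, Z_j)` with `Z_j` row-stochastic, and any `V̂, V*`,
`‖(I-γP)⁻¹ Σ̂_N(V*) (I-γP)⁻ᵀ‖_diag^{1/2} ≤ √2 ‖(I-γP)⁻¹ Σ̂_N(V̂) (I-γP)⁻ᵀ‖_diag^{1/2}
+ (√8/(1-γ))‖V̂ - V*‖_∞`. -/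
theorem covEst_lipschitz
    {D : ℕ} (γ : ℝ) (hγ : γ ∈ Set.Ioo (0 : ℝ) 1)
    (P : Matrix (Fin D) (Fin D) ℝ) (hP : RowStochastic P)
    (N : ℕ) (hN : 2 ≤ N)
    (R : ℕ → Fin D → ℝ) (Z : ℕ → Matrix (Fin D) (Fin D) ℝ)
    (hZ : ∀ j, RowStochastic (Z j))
    (Vhat Vstar : Fin D → ℝ) :
    Real.sqrt (diagNorm ((1 - γ • P)⁻¹ * covEst γ N R Z Vstar * ((1 - γ • P)⁻¹)ᵀ)) ≤
      Real.sqrt 2 *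
          Real.sqrt (diagNorm ((1 - γ • P)⁻¹ * covEst γ N R Z Vhat * ((1 - γ • P)⁻¹)ᵀ)) +
        Real.sqrt 8 / (1 - γ) * ‖Vhat - Vstar‖ :=
  covEst_lipschitz_general γ hγ P hP N R Z hZ Vhat Vstar

end
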